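/- arXiv:1009.0805 — 2 statements merged into one kernel-verified Lean document; each statement's English description precedes it below -/
import Mathlib

section
/- Let X and Y be random variables, let x ∈ ℝ, α > 0, and set f(y) = 1_{y ≤ x}. Suppose g, h : ℝ → ℝ satisfy 1_{y ≤ x−α} ≤ g(y) ≤ f(y) ≤ h(y) ≤ 1_{y ≤ x+α} for all y. Then |Cov(f(X), f(Y))| ≤ max(|Cov(g(X), g(Y))|, |Cov(h(X), h(Y))|) + |E[h(X)]E[h(Y)] − E[g(X)]E[g(Y)]|, and moreover |E[h(X)]E[h(Y)] − E[g(X)]E[g(Y)]| ≤ P(x−α < X ≤ x+α) + P(x−α < Y ≤ x+α). -/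
open MeasureTheory

theorem stmt_4 {Ω : Type*} [MeasureSpace Ω] [IsProbabilityMeasure (volume : Measure Ω)]
    (X Y : Ω → ℝ) (hX : Measurable X) (hY : Measurable Y)
    (x α : ℝ) (hα : 0 < α) (g h : ℝ → ℝ) (hg : Measurable g) (hh : Measurable h)
    (hbound : ∀ y : ℝ,
      (if y ≤ x - α then (1 : ℝ) else 0) ≤ g y ∧
      g y ≤ (if y ≤ x then (1 : ℝ) else 0) ∧
      (if y ≤ x then (1 : ℝ) else 0) ≤ h y ∧
      h y ≤ (if y ≤ x + α then (1 : ℝ) else 0)) :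
    |(∫ ω, (if X ω ≤ x then (1 : ℝ) else 0) * (if Y ω ≤ x then (1 : ℝ) else 0)) -
        (∫ ω, (if X ω ≤ x then (1 : ℝ) else 0)) * ∫ ω, (if Y ω ≤ x then (1 : ℝ) else 0)|
      ≤ max
          |(∫ ω, g (X ω) * g (Y ω)) - (∫ ω, g (X ω)) * ∫ ω, g (Y ω)|
          |(∫ ω, h (X ω) * h (Y ω)) - (∫ ω, h (X ω)) * ∫ ω, h (Y ω)|
        + |(∫ ω, h (X ω)) * (∫ ω, h (Y ω)) - (∫ ω, g (X ω)) * ∫ ω, g (Y ω)|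
    ∧ |(∫ ω, h (X ω)) * (∫ ω, h (Y ω)) - (∫ ω, g (X ω)) * ∫ ω, g (Y ω)|
        ≤ (volume {ω | x - α < X ω ∧ X ω ≤ x + α}).toReal +
          (volume {ω | x - α < Y ω ∧ Y ω ≤ x + α}).toReal := by
  -- pointwise bounds
  have hg0 : ∀ y, 0 ≤ g y := fun y => le_trans (by split_ifs <;> norm_num) (hbound y).1
  have hg1 : ∀ y, g y ≤ 1 := fun y => le_trans (hbound y).2.1 (by split_ifs <;> norm_num)
  have hh0 : ∀ y, 0 ≤ h y := fun y => le_trans (by split_ifs <;> norm_num) (hbound y).2.2.1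
  have hh1 : ∀ y, h y ≤ 1 := fun y => le_trans (hbound y).2.2.2 (by split_ifs <;> norm_num)
  have intb : ∀ F : Ω → ℝ, Measurable F → (∀ ω, 0 ≤ F ω) → (∀ ω, F ω ≤ 1) →
      Integrable F volume := fun F hm h0 h1 =>
    (integrable_const (1:ℝ)).mono' hm.aestronglyMeasurable
      (ae_of_all _ fun ω => by
        rw [Real.norm_eq_abs, abs_of_nonneg (h0 ω)]; exact h1 ω)
  have mind : ∀ c : ℝ, Measurable (fun y : ℝ => if y ≤ c then (1:ℝ) else 0) :=
    fun c => Measurable.ite measurableSet_Iic measurable_const measurable_const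
  have ind0 : ∀ c y : ℝ, (0:ℝ) ≤ if y ≤ c then (1:ℝ) else 0 := by
    intro c y; split_ifs <;> norm_num
  have ind1 : ∀ c y : ℝ, (if y ≤ c then (1:ℝ) else 0) ≤ 1 := by
    intro c y; split_ifs <;> norm_num
  -- integrability
  have igX : Integrable (fun ω => g (X ω)) volume :=
    intb _ (hg.comp hX) (fun ω => hg0 _) (fun ω => hg1 _)
  have igY : Integrable (fun ω => g (Y ω)) volume :=
    intb _ (hg.comp hY) (fun ω => hg0 _) (fun ω => hg1 _)
  have ihX : Integrable (fun ω => h (X ω)) volume :=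
    intb _ (hh.comp hX) (fun ω => hh0 _) (fun ω => hh1 _)
  have ihY : Integrable (fun ω => h (Y ω)) volume :=
    intb _ (hh.comp hY) (fun ω => hh0 _) (fun ω => hh1 _)
  have ifX : ∀ c : ℝ, Integrable (fun ω => if X ω ≤ c then (1:ℝ) else 0) volume :=
    fun c => intb _ ((mind c).comp hX) (fun ω => ind0 _ _) (fun ω => ind1 _ _)
  have ifY : ∀ c : ℝ, Integrable (fun ω => if Y ω ≤ c then (1:ℝ) else 0) volume :=
    fun c => intb _ ((mind c).comp hY) (fun ω => ind0 _ _) (fun ω => ind1 _ _)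
  have igg : Integrable (fun ω => g (X ω) * g (Y ω)) volume :=
    intb _ ((hg.comp hX).mul (hg.comp hY)) (fun ω => mul_nonneg (hg0 _) (hg0 _))
      (fun ω => by nlinarith [hg0 (X ω), hg0 (Y ω), hg1 (X ω), hg1 (Y ω)])
  have ihh : Integrable (fun ω => h (X ω) * h (Y ω)) volume :=
    intb _ ((hh.comp hX).mul (hh.comp hY)) (fun ω => mul_nonneg (hh0 _) (hh0 _))
      (fun ω => by nlinarith [hh0 (X ω), hh0 (Y ω), hh1 (X ω), hh1 (Y ω)])
  have iff' : Integrable (fun ω => (if X ω ≤ x then (1:ℝ) else 0) * (if Y ω ≤ x then (1:ℝ) else 0)) volume :=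
    intb _ (((mind x).comp hX).mul ((mind x).comp hY))
      (fun ω => mul_nonneg (ind0 _ _) (ind0 _ _))
      (fun ω => by
        have := ind0 x (X ω); have := ind1 x (X ω); have := ind0 x (Y ω); have := ind1 x (Y ω)
        nlinarith)
  -- integral comparisons
  have egf : (∫ ω, g (X ω)) ≤ ∫ ω, (if X ω ≤ x then (1:ℝ) else 0) :=
    integral_mono igX (ifX x) (fun ω => (hbound _).2.1)
  have egfY : (∫ ω, g (Y ω)) ≤ ∫ ω, (if Y ω ≤ x then (1:ℝ) else 0) :=
    integral_mono igY (ifY x) (fun ω => (hbound _).2.1)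
  have efh : (∫ ω, (if X ω ≤ x then (1:ℝ) else 0)) ≤ ∫ ω, h (X ω) :=
    integral_mono (ifX x) ihX (fun ω => (hbound _).2.2.1)
  have efhY : (∫ ω, (if Y ω ≤ x then (1:ℝ) else 0)) ≤ ∫ ω, h (Y ω) :=
    integral_mono (ifY x) ihY (fun ω => (hbound _).2.2.1)
  have eggff : (∫ ω, g (X ω) * g (Y ω)) ≤ ∫ ω, (if X ω ≤ x then (1:ℝ) else 0) * (if Y ω ≤ x then (1:ℝ) else 0) :=
    integral_mono igg iff' (fun ω =>
      mul_le_mul (hbound _).2.1 (hbound _).2.1 (hg0 _) (ind0 _ _))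
  have effhh : (∫ ω, (if X ω ≤ x then (1:ℝ) else 0) * (if Y ω ≤ x then (1:ℝ) else 0)) ≤ ∫ ω, h (X ω) * h (Y ω) :=
    integral_mono iff' ihh (fun ω =>
      mul_le_mul (hbound _).2.2.1 (hbound _).2.2.1 (ind0 _ _) (hh0 _))
  -- basic bounds on integrals
  have one_int : (∫ (_ : Ω), (1:ℝ)) = 1 := by simp
  have egX0 : 0 ≤ ∫ ω, g (X ω) := integral_nonneg fun ω => hg0 _
  have egY0 : 0 ≤ ∫ ω, g (Y ω) := integral_nonneg fun ω => hg0 _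
  have ef0 : 0 ≤ ∫ ω, (if X ω ≤ x then (1:ℝ) else 0) := integral_nonneg fun ω => ind0 _ _
  have efY0 : 0 ≤ ∫ ω, (if Y ω ≤ x then (1:ℝ) else 0) := integral_nonneg fun ω => ind0 _ _
  have ehX1 : (∫ ω, h (X ω)) ≤ 1 := by
    calc (∫ ω, h (X ω)) ≤ ∫ (_ : Ω), (1:ℝ) :=
          integral_mono ihX (integrable_const 1) (fun ω => hh1 _)
      _ = 1 := one_int
  have ehY1 : (∫ ω, h (Y ω)) ≤ 1 := by
    calc (∫ ω, h (Y ω)) ≤ ∫ (_ : Ω), (1:ℝ) :=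
          integral_mono ihY (integrable_const 1) (fun ω => hh1 _)
      _ = 1 := one_int
  -- indicator integral equals measure
  have indint : ∀ (Z : Ω → ℝ), Measurable Z → ∀ c : ℝ,
      (∫ ω, (if Z ω ≤ c then (1:ℝ) else 0)) = (volume {ω | Z ω ≤ c}).toReal := by
    intro Z hZ c
    have hs : MeasurableSet {ω | Z ω ≤ c} := measurableSet_le hZ measurable_const
    rw [show (fun ω => if Z ω ≤ c then (1:ℝ) else 0)
        = Set.indicator {ω | Z ω ≤ c} (1 : Ω → ℝ) from by
      funext ω; simp [Set.indicator_apply, Set.mem_setOf_eq]]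
    exact integral_indicator_one hs
  -- measure of interval
  have mdiff : ∀ (Z : Ω → ℝ), Measurable Z →
      (volume {ω | x - α < Z ω ∧ Z ω ≤ x + α}).toReal
        = (volume {ω | Z ω ≤ x + α}).toReal - (volume {ω | Z ω ≤ x - α}).toReal := by
    intro Z hZ
    have hsub : {ω | Z ω ≤ x - α} ⊆ {ω | Z ω ≤ x + α} := fun ω hω => by
      simp only [Set.mem_setOf_eq] at hω ⊢; linarith
    have hset : {ω | x - α < Z ω ∧ Z ω ≤ x + α} = {ω | Z ω ≤ x + α} \ {ω | Z ω ≤ x - α} := by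
      ext ω; simp only [Set.mem_setOf_eq, Set.mem_diff, not_le]; tauto
    rw [hset, measure_diff hsub (measurableSet_le hZ measurable_const).nullMeasurableSet
        (measure_ne_top _ _),
      ENNReal.toReal_sub_of_le (measure_mono hsub) (measure_ne_top _ _)]
  -- bounds giving second part
  have hXb : (∫ ω, h (X ω)) - (∫ ω, g (X ω)) ≤ (volume {ω | x - α < X ω ∧ X ω ≤ x + α}).toReal := by
    have h1 : (∫ ω, h (X ω)) ≤ ∫ ω, (if X ω ≤ x + α then (1:ℝ) else 0) :=
      integral_mono ihX (ifX _) (fun ω => (hbound _).2.2.2)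
    have h2 : (∫ ω, (if X ω ≤ x - α then (1:ℝ) else 0)) ≤ ∫ ω, g (X ω) :=
      integral_mono (ifX _) igX (fun ω => (hbound _).1)
    rw [mdiff X hX]
    rw [indint X hX (x + α)] at h1
    rw [indint X hX (x - α)] at h2
    linarith
  have hYb : (∫ ω, h (Y ω)) - (∫ ω, g (Y ω)) ≤ (volume {ω | x - α < Y ω ∧ Y ω ≤ x + α}).toReal := by
    have h1 : (∫ ω, h (Y ω)) ≤ ∫ ω, (if Y ω ≤ x + α then (1:ℝ) else 0) :=
      integral_mono ihY (ifY _) (fun ω => (hbound _).2.2.2)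
    have h2 : (∫ ω, (if Y ω ≤ x - α then (1:ℝ) else 0)) ≤ ∫ ω, g (Y ω) :=
      integral_mono (ifY _) igY (fun ω => (hbound _).1)
    rw [mdiff Y hY]
    rw [indint Y hY (x + α)] at h1
    rw [indint Y hY (x - α)] at h2
    linarith
  have hgh : (∫ ω, g (X ω)) ≤ ∫ ω, h (X ω) := le_trans egf efh
  have hghY : (∫ ω, g (Y ω)) ≤ ∫ ω, h (Y ω) := le_trans egfY efhY
  have hD0 : 0 ≤ (∫ ω, h (X ω)) * (∫ ω, h (Y ω)) - (∫ ω, g (X ω)) * ∫ ω, g (Y ω) := by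
    nlinarith
  have hDb : (∫ ω, h (X ω)) * (∫ ω, h (Y ω)) - (∫ ω, g (X ω)) * ∫ ω, g (Y ω)
      ≤ ((∫ ω, h (X ω)) - ∫ ω, g (X ω)) + ((∫ ω, h (Y ω)) - ∫ ω, g (Y ω)) := by
    nlinarith
  constructor
  · -- first part
    have hDabs : |(∫ ω, h (X ω)) * (∫ ω, h (Y ω)) - (∫ ω, g (X ω)) * ∫ ω, g (Y ω)|
        = (∫ ω, h (X ω)) * (∫ ω, h (Y ω)) - (∫ ω, g (X ω)) * ∫ ω, g (Y ω) := abs_of_nonneg hD0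
    rw [hDabs, abs_le]
    have hfgprod : (∫ ω, g (X ω)) * (∫ ω, g (Y ω))
        ≤ (∫ ω, (if X ω ≤ x then (1:ℝ) else 0)) * ∫ ω, (if Y ω ≤ x then (1:ℝ) else 0) :=
      mul_le_mul egf egfY egY0 ef0
    have hfhprod : (∫ ω, (if X ω ≤ x then (1:ℝ) else 0)) * (∫ ω, (if Y ω ≤ x then (1:ℝ) else 0))
        ≤ (∫ ω, h (X ω)) * ∫ ω, h (Y ω) :=
      mul_le_mul efh efhY efY0 (le_trans egX0 hgh)
    have l1 := le_max_left |(∫ ω, g (X ω) * g (Y ω)) - (∫ ω, g (X ω)) * ∫ ω, g (Y ω)|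
      |(∫ ω, h (X ω) * h (Y ω)) - (∫ ω, h (X ω)) * ∫ ω, h (Y ω)|
    have l2 := le_max_right |(∫ ω, g (X ω) * g (Y ω)) - (∫ ω, g (X ω)) * ∫ ω, g (Y ω)|
      |(∫ ω, h (X ω) * h (Y ω)) - (∫ ω, h (X ω)) * ∫ ω, h (Y ω)|
    have a1 := neg_abs_le ((∫ ω, g (X ω) * g (Y ω)) - (∫ ω, g (X ω)) * ∫ ω, g (Y ω))
    have a2 := le_abs_self ((∫ ω, h (X ω) * h (Y ω)) - (∫ ω, h (X ω)) * ∫ ω, h (Y ω))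
    constructor <;> nlinarith
  · rw [abs_of_nonneg hD0]; linarith
end

section
/- Let (X_i)_{i∈ℤ} be a sequence of real random variables and for b ≥ 1 define the overlapping blocks Y_{b,i} = (X_{i+1}, …, X_{i+b}) ∈ ℝ^b. Suppose that for all u, v ≥ 1, all bounded Lipschitz f : ℝ^{u} → ℝ and g : ℝ^{v} → ℝ with ‖f‖_∞, ‖g‖_∞ ≤ 1, and all indices s_1 ≤ ⋯ ≤ s_u ≤ t_1 ≤ ⋯ ≤ t_v with t_1 − s_u = r, one has |Cov(f(X_{s_1},…,X_{s_u}), g(X_{t_1},…,X_{t_v}))| ≤ (u·Lip f + v·Lip g)·η(r). Then the block sequence (Y_{b,i})_i satisfies the analogous bound with coefficient η_{Y_b}(r) ≤ b·η(r−b) for r ≥ b: for bounded Lipschitz F : (ℝ^b)^u → ℝ and G : (ℝ^b)^v → ℝ (with the ℓ¹ distance on (ℝ^b)^u ≅ ℝ^{ub}) with sup-norm at most 1, and block indices i_1 ≤ ⋯ ≤ i_u ≤ j_1 ≤ ⋯ ≤ j_v with j_1 − i_u = r ≥ b, |Cov(F(Y_{b,i_1},…,Y_{b,i_u}), G(Y_{b,j_1},…,Y_{b,j_v}))|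 ≤ (u·Lip F + v·Lip G)·b·η(r−b). -/
/-! The blocks `Y_{b,i_1}, …, Y_{b,i_u}` read `X` at the indices `i_p + 1 + j ≤ m := i_u + b`, and
the blocks `Y_{b,j_1}, …, Y_{b,j_v}` at indices `≥ j_1 + 1 = m + 1 + (r - b)`. Listing these indices
with repetitions and sorting them, `F` and `G` become functions of `u b` and `v b` of the variables
`X_n`, with the same `ℓ¹`-Lipschitz constants, so the hypothesis applies with multiplicities `u b`
and `v b`. The gap is then `r - b + 1` rather than `r - b`, and `η` need not be monotone: a dummy
variable at `m + 1` closes the gap, and its cost `Lip F · η (r - b)` is divided by `k` once every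
genuine coordinate of `F` is replaced by the average of `k` copies of itself; let `k → ∞`. -/

open MeasureTheory Finset Function

section L1Lipschitz

variable {ι κ : Type*} [Fintype ι] [Fintype κ]

def L1LipschitzWith (L : ℝ) (f : (ι → ℝ) → ℝ) : Prop :=
  ∀ a a', |f a - f a'| ≤ L * ∑ i, |a i - a' i|

theorem L1LipschitzWith.nonneg [Nonempty ι] {L : ℝ} {f : (ι → ℝ) → ℝ}
    (hf : L1LipschitzWith L f) : 0 ≤ L := by
  have h := hf 0 1
  simp only [Pi.zero_apply, Pi.one_apply, zero_sub, abs_neg, abs_one, sum_const, card_univ,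
    nsmul_eq_mul, mul_one] at h
  exact nonneg_of_mul_nonneg_left ((abs_nonneg _).trans h) (by simp [Fintype.card_pos])

theorem L1LipschitzWith.comp_equiv {L : ℝ} {f : (ι → ℝ) → ℝ} (hf : L1LipschitzWith L f)
    (e : ι ≃ κ) : L1LipschitzWith L fun a : κ → ℝ => f (a ∘ e) := fun a a' =>
  (hf _ _).trans_eq <| by rw [← e.sum_comp fun j => |a j - a' j|]; rfl

theorem sum_comp_le_sum_of_injective {e : κ → ι} (he : Injective e) {g : ι → ℝ}
    (hg : ∀ i, 0 ≤ g i) : ∑ y, g (e y) ≤ ∑ i, g i :=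
  (sum_map univ ⟨e, he⟩ g).symm.le.trans (sum_le_univ_sum_of_nonneg hg)

theorem L1LipschitzWith.comp_average {L : ℝ} {f : (κ → ℝ) → ℝ} (hf : L1LipschitzWith L f)
    (hL : 0 ≤ L) {k : ℕ} {e : κ × Fin k → ι} (he : Injective e) :
    L1LipschitzWith (L / k) fun a : ι → ℝ => f fun x => (∑ c, a (e (x, c))) / k := by
  intro a a'
  have hk : (0 : ℝ) ≤ k := k.cast_nonneg
  calc _ ≤ L * ∑ x, |(∑ c, a (e (x, c))) / k - (∑ c, a' (e (x, c))) / k| := hf _ _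
    _ ≤ L * ((∑ y : κ × Fin k, |a (e y) - a' (e y)|) / k) := by
      gcongr
      rw [Fintype.sum_prod_type, sum_div]
      gcongr with x
      rw [div_sub_div_same, abs_div, abs_of_nonneg hk, ← sum_sub_distrib]
      gcongr
      exact abs_sum_le_sum_abs _ _
    _ ≤ L * ((∑ i, |a i - a' i|) / k) := by
      gcongr
      exact sum_comp_le_sum_of_injective he (g := fun i => |a i - a' i|) fun _ => abs_nonneg _
    _ = L / k * ∑ i, |a i - a' i| := by ring

theorem l1LipschitzWith_uncurry {P Q : Type*} [Fintype P] [Fintype Q] {L : ℝ}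
    {F : (P → Q → ℝ) → ℝ} (hF : ∀ a a', |F a - F a'| ≤ L * ∑ p, ∑ q, |a p q - a' p q|) :
    L1LipschitzWith L fun a : P × Q → ℝ => F (curry a) := fun a a' => by
  rw [Fintype.sum_prod_type]
  exact hF (curry a) (curry a')

end L1Lipschitz

theorem exists_equiv_fin_monotone {α γ : Type*} [Fintype α] [LinearOrder γ] {n : ℕ}
    (hn : Fintype.card α = n) (s : α → γ) : ∃ e : α ≃ Fin n, Monotone (s ∘ e.symm) := by
  let e₀ := Fintype.equivFinOfCardEq hn
  exact ⟨e₀.trans (Tuple.sort (s ∘ e₀.symm)).symm, Tuple.monotone_sort (s ∘ e₀.symm)⟩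

section WeakDependence

variable {Ω : Type*} [MeasureSpace Ω]

noncomputable def cov (f g : Ω → ℝ) : ℝ := (∫ ω, f ω * g ω) - (∫ ω, f ω) * ∫ ω, g ω

def IsWeaklyDependent (X : ℤ → Ω → ℝ) (η : ℕ → ℝ) : Prop :=
  ∀ (u v : ℕ) (f : (Fin (u + 1) → ℝ) → ℝ) (g : (Fin (v + 1) → ℝ) → ℝ) (Lf Lg : ℝ),
    (∀ a, |f a| ≤ 1) → L1LipschitzWith Lf f → (∀ a, |g a| ≤ 1) → L1LipschitzWith Lg g →
    ∀ (s : Fin (u + 1) → ℤ) (t : Fin (v + 1) → ℤ), Monotone s → Monotone t →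
    ∀ r : ℕ, t 0 - s (Fin.last u) = (r : ℤ) →
    |cov (fun ω => f fun i => X (s i) ω) (fun ω => g fun i => X (t i) ω)|
      ≤ ((u + 1 : ℝ) * Lf + (v + 1 : ℝ) * Lg) * η r

variable {X : ℤ → Ω → ℝ} {η : ℕ → ℝ} {α β : Type*} [Fintype α] [Fintype β]
  {f : (α → ℝ) → ℝ} {g : (β → ℝ) → ℝ} {Lf Lg : ℝ}

theorem IsWeaklyDependent.abs_cov_le (h : IsWeaklyDependent X η) (hf : ∀ a, |f a| ≤ 1)
    (hfL : L1LipschitzWith Lf f) (hg : ∀ a, |g a| ≤ 1) (hgL : L1LipschitzWith Lg g)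
    {s : α → ℤ} {t : β → ℤ} {m : ℤ} {r : ℕ} (hs : IsGreatest (Set.range s) m)
    (ht : IsLeast (Set.range t) (m + r)) :
    |cov (fun ω => f fun x => X (s x) ω) (fun ω => g fun y => X (t y) ω)|
      ≤ (Fintype.card α * Lf + Fintype.card β * Lg) * η r := by
  obtain ⟨x₀, -⟩ := hs.1
  obtain ⟨y₀, -⟩ := ht.1
  obtain ⟨u, hu⟩ := Nat.exists_eq_add_one.2 (Fintype.card_pos_iff.2 ⟨x₀⟩)
  obtain ⟨v, hv⟩ := Nat.exists_eq_add_one.2 (Fintype.card_pos_iff.2 ⟨y₀⟩)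
  obtain ⟨e, he⟩ := exists_equiv_fin_monotone hu s
  obtain ⟨e', he'⟩ := exists_equiv_fin_monotone hv t
  have hlast : s (e.symm (Fin.last u)) = m := .symm <| hs.unique
    ⟨Set.mem_range_self _, Set.forall_mem_range.2 fun x => by simpa using he (Fin.le_last (e x))⟩
  have hzero : t (e'.symm 0) = m + r := .symm <| ht.unique
    ⟨Set.mem_range_self _, Set.forall_mem_range.2 fun y => by simpa using he' (Fin.zero_le (e' y))⟩
  have := h u v _ _ Lf Lg (fun a => hf (a ∘ e)) (hfL.comp_equiv e) (fun a => hg (a ∘ e'))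
    (hgL.comp_equiv e') _ _ he he' r (by simp [hlast, hzero])
  simpa [comp_def, hu, hv] using this

theorem IsWeaklyDependent.abs_cov_le_add_div (h : IsWeaklyDependent X η) [Nonempty α]
    (hf : ∀ a, |f a| ≤ 1) (hfL : L1LipschitzWith Lf f) (hg : ∀ a, |g a| ≤ 1)
    (hgL : L1LipschitzWith Lg g) {s : α → ℤ} {t : β → ℤ} {m : ℤ} {r : ℕ} (hs : ∀ x, s x ≤ m)
    (ht : IsLeast (Set.range t) (m + 1 + r)) {k : ℕ} (hk : 0 < k) :
    |cov (fun ω => f fun x => X (s x) ω) (fun ω => g fun y => X (t y) ω)|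
      ≤ (Fintype.card α * Lf + Fintype.card β * Lg) * η r + Lf * η r / k := by
  let s' : α × Fin k ⊕ Unit → ℤ := Sum.elim (fun y => s y.1) fun _ => m + 1
  have hs' : IsGreatest (Set.range s') (m + 1) := by
    refine ⟨⟨Sum.inr (), rfl⟩, Set.forall_mem_range.2 ?_⟩
    rintro (y | -)
    exacts [(hs y.1).trans (Int.le_add_one le_rfl), le_rfl]
  have hk' : (k : ℝ) ≠ 0 := by positivity
  have key := h.abs_cov_le (fun a => hf _) (hfL.comp_average hfL.nonneg Sum.inl_injective) hg hgL
    hs' ht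
  have havg (ω : Ω) : (fun x => (∑ c : Fin k, X (s' (Sum.inl (x, c))) ω) / k) =
      fun x => X (s x) ω := by
    funext x
    simp [s', hk']
  simp only [havg] at key
  convert key using 1
  simp only [Fintype.card_sum, Fintype.card_prod, Fintype.card_fin, Fintype.card_unit]
  push_cast
  field_simp
  ring

theorem IsWeaklyDependent.abs_cov_le_of_le_of_isLeast (h : IsWeaklyDependent X η) [Nonempty α]
    (hf : ∀ a, |f a| ≤ 1) (hfL : L1LipschitzWith Lf f) (hg : ∀ a, |g a| ≤ 1)
    (hgL : L1LipschitzWith Lg g) {s : α → ℤ} {t : β → ℤ} {m : ℤ} {r : ℕ} (hs : ∀ x, s x ≤ m)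
    (ht : IsLeast (Set.range t) (m + 1 + r)) :
    |cov (fun ω => f fun x => X (s x) ω) (fun ω => g fun y => X (t y) ω)|
      ≤ (Fintype.card α * Lf + Fintype.card β * Lg) * η r := by
  have hlim := (tendsto_const_div_atTop_nhds_zero_nat (Lf * η r)).const_add
    ((Fintype.card α * Lf + Fintype.card β * Lg) * η r)
  rw [add_zero] at hlim
  exact ge_of_tendsto hlim <|
    Filter.eventually_atTop.2 ⟨1, fun k hk => h.abs_cov_le_add_div hf hfL hg hgL hs ht hk⟩

end WeakDependence

theorem stmt_17_general {Ω : Type*} [MeasureSpace Ω]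
    (X : ℤ → Ω → ℝ) (η : ℕ → ℝ) (b : ℕ) (hb : 1 ≤ b)
    (hdep : ∀ (u v : ℕ) (f : (Fin (u + 1) → ℝ) → ℝ) (g : (Fin (v + 1) → ℝ) → ℝ)
      (Lf Lg : ℝ),
      (∀ a, |f a| ≤ 1) → (∀ a a', |f a - f a'| ≤ Lf * ∑ i, |a i - a' i|) →
      (∀ a, |g a| ≤ 1) → (∀ a a', |g a - g a'| ≤ Lg * ∑ i, |a i - a' i|) →
      ∀ (s : Fin (u + 1) → ℤ) (t : Fin (v + 1) → ℤ), Monotone s → Monotone t →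
      ∀ r : ℕ, t 0 - s (Fin.last u) = (r : ℤ) →
      |(∫ ω, f (fun i => X (s i) ω) * g (fun i => X (t i) ω)) -
          (∫ ω, f (fun i => X (s i) ω)) * ∫ ω, g (fun i => X (t i) ω)|
        ≤ ((u + 1 : ℝ) * Lf + (v + 1 : ℝ) * Lg) * η r) :
    ∀ (u v : ℕ) (F : (Fin (u + 1) → Fin b → ℝ) → ℝ)
      (G : (Fin (v + 1) → Fin b → ℝ) → ℝ) (LF LG : ℝ),
      (∀ a, |F a| ≤ 1) →
      (∀ a a', |F a - F a'| ≤ LF * ∑ p, ∑ j, |a p j - a' p j|) →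
      (∀ a, |G a| ≤ 1) →
      (∀ a a', |G a - G a'| ≤ LG * ∑ p, ∑ j, |a p j - a' p j|) →
      ∀ (I : Fin (u + 1) → ℤ) (J : Fin (v + 1) → ℤ), Monotone I → Monotone J →
      ∀ r : ℕ, b ≤ r → J 0 - I (Fin.last u) = (r : ℤ) →
      |(∫ ω, F (fun p j => X (I p + 1 + (j : ℤ)) ω) *
            G (fun p j => X (J p + 1 + (j : ℤ)) ω)) -
          (∫ ω, F (fun p j => X (I p + 1 + (j : ℤ)) ω)) *
            ∫ ω, G (fun p j => X (J p + 1 + (j : ℤ)) ω)|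
        ≤ ((u + 1 : ℝ) * LF + (v + 1 : ℝ) * LG) * ((b : ℝ) * η (r - b)) := by
  intro u v F G LF LG hF hFL hG hGL I J hI hJ r hbr hr
  have : Nonempty (Fin b) := ⟨⟨0, hb⟩⟩
  have hs (x : Fin (u + 1) × Fin b) : I x.1 + 1 + x.2 ≤ I (Fin.last u) + b := by
    have := hI (Fin.le_last x.1)
    omega
  have ht : IsLeast (Set.range fun y : Fin (v + 1) × Fin b => J y.1 + 1 + y.2)
      (I (Fin.last u) + b + 1 + (r - b : ℕ)) := by
    push_cast [Nat.cast_sub hbr]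
    refine ⟨⟨(0, ⟨0, hb⟩), by dsimp only; omega⟩, Set.forall_mem_range.2 fun y => ?_⟩
    have := hJ (Fin.zero_le y.1)
    omega
  have hX : IsWeaklyDependent X η := hdep
  have key := hX.abs_cov_le_of_le_of_isLeast (fun _ => hF _)
    (l1LipschitzWith_uncurry hFL) (fun _ => hG _) (l1LipschitzWith_uncurry hGL) hs ht
  refine key.trans_eq ?_
  simp only [Fintype.card_prod, Fintype.card_fin, Nat.cast_mul, Nat.cast_add, Nat.cast_one]
  ring

theorem stmt_17 {Ω : Type*} [MeasureSpace Ω] [IsProbabilityMeasure (volume : Measure Ω)]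
    (X : ℤ → Ω → ℝ) (hXm : ∀ i, Measurable (X i)) (η : ℕ → ℝ) (b : ℕ) (hb : 1 ≤ b)
    (hdep : ∀ (u v : ℕ) (f : (Fin (u + 1) → ℝ) → ℝ) (g : (Fin (v + 1) → ℝ) → ℝ)
      (Lf Lg : ℝ),
      (∀ a, |f a| ≤ 1) → (∀ a a', |f a - f a'| ≤ Lf * ∑ i, |a i - a' i|) →
      (∀ a, |g a| ≤ 1) → (∀ a a', |g a - g a'| ≤ Lg * ∑ i, |a i - a' i|) →
      ∀ (s : Fin (u + 1) → ℤ) (t : Fin (v + 1) → ℤ), Monotone s → Monotone t →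
      ∀ r : ℕ, t 0 - s (Fin.last u) = (r : ℤ) →
      |(∫ ω, f (fun i => X (s i) ω) * g (fun i => X (t i) ω)) -
          (∫ ω, f (fun i => X (s i) ω)) * ∫ ω, g (fun i => X (t i) ω)|
        ≤ ((u + 1 : ℝ) * Lf + (v + 1 : ℝ) * Lg) * η r) :
    ∀ (u v : ℕ) (F : (Fin (u + 1) → Fin b → ℝ) → ℝ)
      (G : (Fin (v + 1) → Fin b → ℝ) → ℝ) (LF LG : ℝ),
      (∀ a, |F a| ≤ 1) →
      (∀ a a', |F a - F a'| ≤ LF * ∑ p, ∑ j, |a p j - a' p j|) →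
      (∀ a, |G a| ≤ 1) →
      (∀ a a', |G a - G a'| ≤ LG * ∑ p, ∑ j, |a p j - a' p j|) →
      ∀ (I : Fin (u + 1) → ℤ) (J : Fin (v + 1) → ℤ), Monotone I → Monotone J →
      ∀ r : ℕ, b ≤ r → J 0 - I (Fin.last u) = (r : ℤ) →
      |(∫ ω, F (fun p j => X (I p + 1 + (j : ℤ)) ω) *
            G (fun p j => X (J p + 1 + (j : ℤ)) ω)) -
          (∫ ω, F (fun p j => X (I p + 1 + (j : ℤ)) ω)) *
            ∫ ω, G (fun p j => X (J p + 1 + (j : ℤ)) ω)|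
        ≤ ((u + 1 : ℝ) * LF + (v + 1 : ℝ) * LG) * ((b : ℝ) * η (r - b)) :=
  stmt_17_general X η b hb hdep
end
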